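/- Let H be a real Hilbert space with the spin triple product {x,y,z} = ⟨x,y⟩z + ⟨z,y⟩x - ⟨x,z⟩y. Every bounded linear T : H → H satisfying T{x,x,x} = 2{T x,x,x} + {x,T x,x} for all x is a triple derivation of the spin triple product. -/

import Mathlib

/-! On the diagonal, `{x,x,x} = ⟪x,x⟫ x` and `2{Tx,x,x} + {x,Tx,x} = ⟪x,x⟫ Tx + 2⟪x,Tx⟫ x`,
so the hypothesis says exactly that `⟪x, T x⟫ = 0` for every `x`. By polarization `T` is
skew-symmetric, `⟪T u, v⟫ = -⟪u, T v⟫`, and every skew-symmetric operator is a derivation of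
the spin triple product: moving `T` across each inner product makes the terms cancel. -/

open RealInnerProductSpace

noncomputable def tpS {H : Type*} [NormedAddCommGroup H] [InnerProductSpace ℝ H]
    (x y z : H) : H := ⟪x, y⟫ • z + ⟪z, y⟫ • x - ⟪x, z⟫ • y

section SpinTripleProduct

variable {H : Type*} [NormedAddCommGroup H] [InnerProductSpace ℝ H]

theorem tpS_self_self_self (x : H) : tpS x x x = ⟪x, x⟫ • x := by
  simp only [tpS]
  module

theorem two_smul_tpS_add_tpS (x a : H) :
    (2 : ℝ) • tpS a x x + tpS x a x = ⟪x, x⟫ • a + (2 * ⟪x, a⟫) • x := by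
  simp only [tpS, real_inner_comm a x]
  module

theorem inner_self_map_eq_zero_of_map_tpS_self (T : H →ₗ[ℝ] H) {x : H}
    (hx : T (tpS x x x) = (2 : ℝ) • tpS (T x) x x + tpS x (T x) x) : ⟪x, T x⟫ = 0 := by
  rw [two_smul_tpS_add_tpS, tpS_self_self_self, map_smul, left_eq_add, smul_eq_zero] at hx
  rcases hx with hx | rfl
  · linarith
  · exact inner_zero_left _

theorem inner_map_eq_neg_inner_map_of_inner_self_map_eq_zero (T : H →ₗ[ℝ] H)
    (hT : ∀ x, ⟪x, T x⟫ = 0) (u v : H) : ⟪T u, v⟫ = -⟪u, T v⟫ := by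
  have huv := hT (u + v)
  simp only [map_add, inner_add_left, inner_add_right, hT u, hT v, real_inner_comm (T u) v]
    at huv
  linarith

theorem map_tpS_of_inner_map_eq_neg (T : H →ₗ[ℝ] H) (hT : ∀ u v, ⟪T u, v⟫ = -⟪u, T v⟫)
    (x y z : H) : T (tpS x y z) = tpS (T x) y z + tpS x (T y) z + tpS x y (T z) := by
  simp only [tpS, map_add, map_sub, map_smul, hT]
  module

end SpinTripleProduct

theorem stmt_11 {H : Type*} [NormedAddCommGroup H] [InnerProductSpace ℝ H]
    (T : H →L[ℝ] H)
    (h : ∀ x : H, T (tpS x x x) = (2 : ℝ) • tpS (T x) x x + tpS x (T x) x) :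
    ∀ x y z : H, T (tpS x y z) = tpS (T x) y z + tpS x (T y) z + tpS x y (T z) :=
  map_tpS_of_inner_map_eq_neg T.toLinearMap
    (inner_map_eq_neg_inner_map_of_inner_self_map_eq_zero T.toLinearMap
      fun x => inner_self_map_eq_zero_of_map_tpS_self T.toLinearMap (h x))
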